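/- Let Γ̂ be a δ-hyperbolic spider's web of bounded valence associated to a rooted tree T whose counting measure satisfies c·a^r ≤ μ(B_r^T(x)) ≤ C·b^r for all vertices x and integers r ≥ 1 (with 1 < a ≤ b). Then there exist positive constants c', C' such that c'·a^r ≤ μ(B_r^{Γ̂}(x)) ≤ C'·b^r for every vertex x and every positive integer r. -/

import Mathlib

/-- A spider's web: a graph `G` obtained from a rooted tree `T` (root `o`,
predecessor map `p`, level function `lvl`) by adding edges, such that added edges
only join vertices of the same level, and two same-level neighbours have
predecessors that coincide or are neighbours. -/
structure SpiderWeb (V : Type*) where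
  G : SimpleGraph V
  T : SimpleGraph V
  o : V
  p : V → V
  lvl : V → ℕ
  lvl_root : lvl o = 0
  root_eq : ∀ x, lvl x = 0 → x = o
  p_lvl : ∀ x, x ≠ o → lvl (p x) + 1 = lvl x
  T_adj : ∀ x y, T.Adj x y ↔ (x ≠ o ∧ p x = y) ∨ (y ≠ o ∧ p y = x)
  T_le_G : T ≤ G
  T_connected : T.Connected
  adj_lvl : ∀ x y, G.Adj x y → ¬ T.Adj x y → lvl x = lvl y
  horiz : ∀ x y, G.Adj x y → lvl x = lvl y → p x = p y ∨ G.Adj (p x) (p y)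

noncomputable def gromovProd {V : Type*} (d : V → V → ℕ) (x y w : V) : ℝ :=
  ((d w x : ℝ) + (d w y : ℝ) - (d x y : ℝ)) / 2

/-!
The lower bound holds because `T ≤ G`, so tree balls sit inside graph balls. For the upper
bound, let `d(x, z) ≤ r` and let `ℓ = ⌊(x | z)_o⌋`. Since the distance to the root is the level,
ancestors lie on geodesics from the root, and the four-point condition applied along the chain
`p^s x, x, z, p^t z` (ancestors at level `ℓ`) puts `p^s x` within `4δ` of `p^t z`, while
`s + t ≤ d(x, z) + 1`. Hence `z` lies in a tree ball of radius `r + 2 - s` around one of the at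
most `(M + 1)^⌊4δ⌋` vertices near `p^s x`, and summing `C b^(r + 2 - s)` over `s` is a geometric
series bounded by a constant times `b^r`.
-/

open Finset

lemma Set.ncard_biUnion_le_ncard_mul {ι α : Type*} {t : Set ι} (ht : t.Finite)
    {f : ι → Set α} {K : ℝ} (hf : ∀ i ∈ t, ((f i).ncard : ℝ) ≤ K) :
    ((⋃ i ∈ t, f i).ncard : ℝ) ≤ t.ncard * K := by
  have ht' : ⋃ i ∈ t, f i = ⋃ i ∈ ht.toFinset, f i := by simp
  calc ((⋃ i ∈ t, f i).ncard : ℝ) ≤ ((∑ i ∈ ht.toFinset, (f i).ncard : ℕ) : ℝ) := by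
        rw [ht']; exact_mod_cast ht.toFinset.set_ncard_biUnion_le f
    _ ≤ ∑ _i ∈ ht.toFinset, K := by
        push_cast
        exact sum_le_sum fun i hi => hf i (ht.mem_toFinset.1 hi)
    _ = t.ncard * K := by simp [Set.ncard_eq_toFinset_card t ht]

lemma sum_range_pow_sub_le {b : ℝ} (hb : 1 < b) (n : ℕ) :
    ∑ s ∈ range n, b ^ (n - s) ≤ b ^ n / (1 - b⁻¹) := by
  have hb0 : b ≠ 0 := by positivity
  calc ∑ s ∈ range n, b ^ (n - s) = b ^ n * ∑ s ∈ range n, b⁻¹ ^ s := by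
        rw [mul_sum]
        refine sum_congr rfl fun s hs => ?_
        rw [pow_sub₀ b hb0 (mem_range.1 hs).le, inv_pow]
    _ ≤ b ^ n * (1 / (1 - b⁻¹)) := by
        refine mul_le_mul_of_nonneg_left ?_ (by positivity)
        have := geom_sum_Ico_le_of_lt_one (m := 0) (n := n) (by positivity)
          (inv_lt_one_of_one_lt₀ hb)
        rwa [← range_eq_Ico, pow_zero] at this
    _ = b ^ n / (1 - b⁻¹) := mul_one_div _ _

namespace SimpleGraph

variable {V : Type*} {G : SimpleGraph V}

lemma Connected.setOf_dist_le_succ_subset (hG : G.Connected) (u : V) (n : ℕ) :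
    {z | G.dist u z ≤ n + 1} ⊆ ⋃ v ∈ {z | G.dist u z ≤ n}, insert v (G.neighborSet v) := by
  intro w hw
  simp only [Set.mem_iUnion, Set.mem_insert_iff, mem_neighborSet, exists_prop]
  by_cases hle : G.dist u w ≤ n
  · exact ⟨w, hle, Or.inl rfl⟩
  obtain ⟨q, hq⟩ := hG.exists_walk_length_eq_dist w u
  cases q with
  | nil => simp at hle
  | @cons _ v _ hadj q =>
      refine ⟨v, ?_, Or.inr hadj.symm⟩
      have := dist_le q.reverse
      rw [Walk.length_reverse] at this
      rw [Walk.length_cons, dist_comm] at hq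
      have hw : G.dist u w ≤ n + 1 := hw
      show G.dist u v ≤ n
      omega

lemma Connected.finite_setOf_dist_le (hG : G.Connected) {M : ℕ}
    (hval : ∀ x : V, (G.neighborSet x).Finite ∧ (G.neighborSet x).ncard ≤ M) (u : V) (n : ℕ) :
    {z | G.dist u z ≤ n}.Finite := by
  induction n with
  | zero => simp [hG.dist_eq_zero_iff]
  | succ n ih =>
      exact (ih.biUnion fun v _ => (hval v).1.insert v).subset
        (hG.setOf_dist_le_succ_subset u n)

lemma Connected.ncard_setOf_dist_le_le (hG : G.Connected) {M : ℕ}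
    (hval : ∀ x : V, (G.neighborSet x).Finite ∧ (G.neighborSet x).ncard ≤ M) (u : V) (n : ℕ) :
    ({z | G.dist u z ≤ n}.ncard : ℝ) ≤ ((M : ℝ) + 1) ^ n := by
  induction n with
  | zero => simp [hG.dist_eq_zero_iff]
  | succ n ih =>
      have hnbhd : ∀ v, ((insert v (G.neighborSet v)).ncard : ℝ) ≤ M + 1 := fun v => by
        exact_mod_cast (Set.ncard_insert_le v _).trans (Nat.add_le_add_right (hval v).2 1)
      calc ({z | G.dist u z ≤ n + 1}.ncard : ℝ)
          ≤ ((⋃ v ∈ {z | G.dist u z ≤ n}, insert v (G.neighborSet v)).ncard : ℝ) := by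
            gcongr
            · exact (hG.finite_setOf_dist_le hval u n).biUnion fun v _ => (hval v).1.insert v
            · exact hG.setOf_dist_le_succ_subset u n
        _ ≤ {z | G.dist u z ≤ n}.ncard * ((M : ℝ) + 1) :=
            Set.ncard_biUnion_le_ncard_mul (hG.finite_setOf_dist_le hval u n) fun v _ => hnbhd v
        _ ≤ ((M : ℝ) + 1) ^ (n + 1) := by rw [pow_succ]; gcongr

lemma gromovProd_dist_comm (x y w : V) : gromovProd G.dist x y w = gromovProd G.dist y x w := by
  rw [gromovProd, gromovProd, G.dist_comm (u := x)]
  ring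

end SimpleGraph

def IsGromovHyperbolic {V : Type*} (d : V → V → ℕ) (δ : ℝ) : Prop :=
  ∀ w x y z : V, gromovProd d x z w ≥ min (gromovProd d x y w) (gromovProd d y z w) - δ

lemma IsGromovHyperbolic.le_gromovProd_of_chain {V : Type*} {d : V → V → ℕ} {δ k : ℝ}
    (hd : IsGromovHyperbolic d δ) (hδ : 0 ≤ δ) {w x y z u : V}
    (hxy : k ≤ gromovProd d x y w) (hyz : k ≤ gromovProd d y z w)
    (hzu : k ≤ gromovProd d z u w) : k - 2 * δ ≤ gromovProd d x u w := by
  have hxz : k - δ ≤ gromovProd d x z w := (sub_le_sub_right (le_min hxy hyz) δ).trans (hd w x y z)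
  have hzu' : k - δ ≤ gromovProd d z u w := by linarith
  linarith [hd w x z u, le_min hxz hzu']

namespace SpiderWeb

variable {V : Type*} (S : SpiderWeb V)

lemma G_connected : S.G.Connected := S.T_connected.mono S.T_le_G

lemma G_dist_le_T_dist (x y : V) : S.G.dist x y ≤ S.T.dist x y :=
  (S.T_connected.preconnected x y).dist_anti S.T_le_G

lemma T_adj_p {x : V} (hx : x ≠ S.o) : S.T.Adj x (S.p x) :=
  (S.T_adj x (S.p x)).2 (Or.inl ⟨hx, rfl⟩)

lemma lvl_le_of_adj {x y : V} (h : S.G.Adj x y) : S.lvl y ≤ S.lvl x + 1 := by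
  by_cases ht : S.T.Adj x y
  · rcases (S.T_adj x y).1 ht with ⟨hx, rfl⟩ | ⟨hy, rfl⟩
    · have := S.p_lvl x hx; omega
    · have := S.p_lvl y hy; omega
  · rw [S.adj_lvl x y h ht]; omega

lemma lvl_le_add_length {x y : V} (q : S.G.Walk x y) : S.lvl y ≤ S.lvl x + q.length := by
  induction q with
  | nil => simp
  | cons h q ih =>
      have := S.lvl_le_of_adj h
      simp only [SimpleGraph.Walk.length_cons]
      omega

lemma lvl_le_add_dist (x y : V) : S.lvl y ≤ S.lvl x + S.G.dist x y := by
  obtain ⟨q, hq⟩ := S.G_connected.exists_walk_length_eq_dist x y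
  exact hq ▸ S.lvl_le_add_length q

lemma ne_root_of_lvl_pos {x : V} (h : 0 < S.lvl x) : x ≠ S.o := by
  rintro rfl; simp [S.lvl_root] at h

lemma lvl_iterate_p_add {s : ℕ} {x : V} (h : s ≤ S.lvl x) :
    S.lvl (S.p^[s] x) + s = S.lvl x := by
  induction s generalizing x with
  | zero => rfl
  | succ s ih =>
      have hp := S.p_lvl x (S.ne_root_of_lvl_pos (x := x) (by omega))
      have := ih (x := S.p x) (by omega)
      rw [Function.iterate_succ_apply]
      omega

lemma T_dist_iterate_p_le {s : ℕ} {x : V} (h : s ≤ S.lvl x) : S.T.dist x (S.p^[s] x) ≤ s := by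
  induction s generalizing x with
  | zero => simp
  | succ s ih =>
      have hx := S.ne_root_of_lvl_pos (x := x) (by omega)
      have hp := S.p_lvl x hx
      rw [Function.iterate_succ_apply]
      calc S.T.dist x (S.p^[s] (S.p x))
          ≤ S.T.dist x (S.p x) + S.T.dist (S.p x) (S.p^[s] (S.p x)) :=
            S.T_connected.dist_triangle
        _ ≤ 1 + s := by
            rw [SimpleGraph.dist_eq_one_iff_adj.2 (S.T_adj_p hx)]
            exact Nat.add_le_add_left (ih (by omega)) 1
        _ = s + 1 := by ring

lemma dist_iterate_p {s : ℕ} {x : V} (h : s ≤ S.lvl x) :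
    S.G.dist x (S.p^[s] x) = s ∧ S.T.dist x (S.p^[s] x) = s := by
  have hT := S.T_dist_iterate_p_le h
  have hG := S.G_dist_le_T_dist x (S.p^[s] x)
  have hlvl := S.lvl_iterate_p_add h
  have := S.lvl_le_add_dist (S.p^[s] x) x
  rw [SimpleGraph.dist_comm] at this
  omega

lemma dist_root (x : V) : S.G.dist S.o x = S.lvl x := by
  have h := S.lvl_iterate_p_add (le_refl (S.lvl x))
  have hroot := S.root_eq _ (by omega : S.lvl (S.p^[S.lvl x] x) = 0)
  rw [SimpleGraph.dist_comm, ← (S.dist_iterate_p (le_refl (S.lvl x))).1, hroot]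

lemma gromovProd_root (x y : V) :
    gromovProd S.G.dist x y S.o = ((S.lvl x : ℝ) + S.lvl y - S.G.dist x y) / 2 := by
  rw [gromovProd, S.dist_root, S.dist_root]

lemma gromovProd_iterate_p_root {s : ℕ} {x : V} (h : s ≤ S.lvl x) :
    gromovProd S.G.dist (S.p^[s] x) x S.o = S.lvl (S.p^[s] x) := by
  rw [gromovProd_root, SimpleGraph.dist_comm, (S.dist_iterate_p h).1]
  have : ((S.lvl (S.p^[s] x) + s : ℕ) : ℝ) = S.lvl x := by rw [S.lvl_iterate_p_add h]
  push_cast at this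
  linarith

lemma exists_iterate_p_dist_le {δ : ℝ} (hd : IsGromovHyperbolic S.G.dist δ) (hδ : 0 ≤ δ)
    (x z : V) : ∃ s t : ℕ, t ≤ S.lvl z ∧ s + t ≤ S.G.dist x z + 1 ∧
      (S.G.dist (S.p^[s] x) (S.p^[t] z) : ℝ) ≤ 4 * δ := by
  set g := gromovProd S.G.dist x z S.o
  have hg : g = ((S.lvl x : ℝ) + S.lvl z - S.G.dist x z) / 2 := S.gromovProd_root x z
  have hlz : (S.lvl z : ℝ) ≤ S.lvl x + S.G.dist x z := by exact_mod_cast S.lvl_le_add_dist x z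
  have hlx : (S.lvl x : ℝ) ≤ S.lvl z + S.G.dist x z := by
    exact_mod_cast S.G.dist_comm (u := z) ▸ S.lvl_le_add_dist z x
  have htri : (S.G.dist x z : ℝ) ≤ S.lvl x + S.lvl z := by
    have : S.G.dist x z ≤ S.G.dist x S.o + S.G.dist S.o z := S.G_connected.dist_triangle
    rw [SimpleGraph.dist_comm (u := x) (v := S.o), S.dist_root, S.dist_root] at this
    exact_mod_cast this
  set ℓ := ⌊g⌋₊
  have hℓg : (ℓ : ℝ) ≤ g := Nat.floor_le (by linarith)
  have hgℓ : g < ℓ + 1 := Nat.lt_floor_add_one g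
  have hℓx : ℓ ≤ S.lvl x := Nat.cast_le.1 (hℓg.trans (by linarith))
  have hℓz : ℓ ≤ S.lvl z := Nat.cast_le.1 (hℓg.trans (by linarith))
  have hy : S.lvl (S.p^[S.lvl x - ℓ] x) = ℓ := by
    have := S.lvl_iterate_p_add (Nat.sub_le (S.lvl x) ℓ); omega
  have hy' : S.lvl (S.p^[S.lvl z - ℓ] z) = ℓ := by
    have := S.lvl_iterate_p_add (Nat.sub_le (S.lvl z) ℓ); omega
  refine ⟨S.lvl x - ℓ, S.lvl z - ℓ, Nat.sub_le _ _, ?_, ?_⟩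
  · have : (S.lvl x : ℝ) + S.lvl z < S.G.dist x z + 2 * ℓ + 2 := by linarith
    have : S.lvl x + S.lvl z < S.G.dist x z + 2 * ℓ + 2 := by exact_mod_cast this
    omega
  · have hleft : (ℓ : ℝ) ≤ gromovProd S.G.dist (S.p^[S.lvl x - ℓ] x) x S.o := by
      rw [S.gromovProd_iterate_p_root (Nat.sub_le _ _), hy]
    have hright : (ℓ : ℝ) ≤ gromovProd S.G.dist z (S.p^[S.lvl z - ℓ] z) S.o := by
      rw [SimpleGraph.gromovProd_dist_comm, S.gromovProd_iterate_p_root (Nat.sub_le _ _), hy']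
    have hc := hd.le_gromovProd_of_chain hδ hleft hℓg hright
    rw [gromovProd_root, hy, hy'] at hc
    linarith

lemma setOf_T_dist_le_subset (x : V) (r : ℕ) :
    {z | S.T.dist x z ≤ r} ⊆ {z | S.G.dist x z ≤ r} :=
  fun z hz => (S.G_dist_le_T_dist x z).trans hz

-- The radius `r + 2 - s` exceeds the sharp `r + 1 - s` by one so that it is never `0`, where
-- the tree-ball volume bound gives nothing.
lemma setOf_dist_le_subset_biUnion {δ : ℝ} (hd : IsGromovHyperbolic S.G.dist δ) (hδ : 0 ≤ δ)
    (x : V) (r : ℕ) :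
    {z | S.G.dist x z ≤ r} ⊆ ⋃ s ∈ range (r + 2),
      ⋃ v ∈ {w | S.G.dist (S.p^[s] x) w ≤ ⌊4 * δ⌋₊}, {z | S.T.dist v z ≤ r + 2 - s} := by
  intro z hz
  obtain ⟨s, t, ht, hst, hclose⟩ := S.exists_iterate_p_dist_le hd hδ x z
  have hz : S.G.dist x z ≤ r := hz
  have hTt : S.T.dist (S.p^[t] z) z = t := SimpleGraph.dist_comm ▸ (S.dist_iterate_p ht).2
  simp only [Set.mem_iUnion, mem_range]
  exact ⟨s, by omega, S.p^[t] z, Nat.le_floor hclose, show S.T.dist _ z ≤ _ by omega⟩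

lemma ncard_setOf_dist_le_le {δ b C : ℝ} {M : ℕ} (hd : IsGromovHyperbolic S.G.dist δ)
    (hδ : 0 ≤ δ) (hb : 1 < b) (hC : 0 ≤ C)
    (hval : ∀ x : V, (S.G.neighborSet x).Finite ∧ (S.G.neighborSet x).ncard ≤ M)
    (hT : ∀ (v : V) (m : ℕ), 1 ≤ m → (({z | S.T.dist v z ≤ m} : Set V).ncard : ℝ) ≤ C * b ^ m)
    (x : V) (r : ℕ) :
    (({z | S.G.dist x z ≤ r} : Set V).ncard : ℝ) ≤
      ((M : ℝ) + 1) ^ ⌊4 * δ⌋₊ * C * b ^ 2 / (1 - b⁻¹) * b ^ r := by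
  set D := ⌊4 * δ⌋₊
  have hGfin := S.G_connected.finite_setOf_dist_le hval
  have hTfin (v : V) (m : ℕ) : {z | S.T.dist v z ≤ m}.Finite :=
    (hGfin v m).subset (S.setOf_T_dist_le_subset v m)
  have hpiece : ∀ s ∈ range (r + 2),
      (((⋃ v ∈ {w | S.G.dist (S.p^[s] x) w ≤ D}, {z | S.T.dist v z ≤ r + 2 - s}) : Set V).ncard
        : ℝ) ≤ ((M : ℝ) + 1) ^ D * (C * b ^ (r + 2 - s)) := fun s hs => by
    have hs : s < r + 2 := mem_range.1 hs
    calc _ ≤ ({w | S.G.dist (S.p^[s] x) w ≤ D}.ncard : ℝ) * (C * b ^ (r + 2 - s)) :=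
          Set.ncard_biUnion_le_ncard_mul (hGfin _ D) fun v _ => hT v _ (by omega)
      _ ≤ _ := mul_le_mul_of_nonneg_right
          (S.G_connected.ncard_setOf_dist_le_le hval _ D) (by positivity)
  calc (({z | S.G.dist x z ≤ r} : Set V).ncard : ℝ)
      ≤ ((⋃ s ∈ range (r + 2), ⋃ v ∈ {w | S.G.dist (S.p^[s] x) w ≤ D},
          {z | S.T.dist v z ≤ r + 2 - s}) : Set V).ncard := by
        gcongr
        · exact (finite_toSet _).biUnion fun s _ => (hGfin _ D).biUnion fun v _ => hTfin v _
        · exact S.setOf_dist_le_subset_biUnion hd hδ x r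
    _ ≤ ∑ s ∈ range (r + 2), (((⋃ v ∈ {w | S.G.dist (S.p^[s] x) w ≤ D},
          {z | S.T.dist v z ≤ r + 2 - s}) : Set V).ncard : ℝ) := by
        exact_mod_cast set_ncard_biUnion_le _ _
    _ ≤ ∑ s ∈ range (r + 2), ((M : ℝ) + 1) ^ D * (C * b ^ (r + 2 - s)) := sum_le_sum hpiece
    _ = ((M : ℝ) + 1) ^ D * C * ∑ s ∈ range (r + 2), b ^ (r + 2 - s) := by
        simp only [mul_sum, mul_assoc]
    _ ≤ ((M : ℝ) + 1) ^ D * C * (b ^ (r + 2) / (1 - b⁻¹)) :=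
        mul_le_mul_of_nonneg_left (sum_range_pow_sub_le hb _) (by positivity)
    _ = ((M : ℝ) + 1) ^ D * C * b ^ 2 / (1 - b⁻¹) * b ^ r := by ring

end SpiderWeb

/-- If a δ-hyperbolic spider's web of bounded valence has tree balls of
pinched exponential volume (`c·a^r ≤ #B_r^T(x) ≤ C·b^r` for integers `r ≥ 1`), then
its graph balls also satisfy pinched exponential volume bounds with the same `a, b`. -/
theorem stmt_9 {V : Type*} (S : SpiderWeb V) (δ a b c C : ℝ) (M : ℕ) (hδ : 0 ≤ δ)
    (ha : 1 < a) (hab : a ≤ b) (hc : 0 < c) (hC : 0 < C)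
    (hhyp : ∀ w x y z : V,
      gromovProd S.G.dist x z w ≥
        min (gromovProd S.G.dist x y w) (gromovProd S.G.dist y z w) - δ)
    (hval : ∀ x : V, (S.G.neighborSet x).Finite ∧ ((S.G.neighborSet x).ncard : ℕ) ≤ M)
    (hvol : ∀ (x : V) (r : ℕ), 1 ≤ r →
      c * a ^ r ≤ (({z | S.T.dist x z ≤ r} : Set V).ncard : ℝ) ∧
        (({z | S.T.dist x z ≤ r} : Set V).ncard : ℝ) ≤ C * b ^ r) :
    ∃ c' C' : ℝ, 0 < c' ∧ 0 < C' ∧ ∀ (x : V) (r : ℕ), 1 ≤ r →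
      c' * a ^ r ≤ (({z | S.G.dist x z ≤ r} : Set V).ncard : ℝ) ∧
        (({z | S.G.dist x z ≤ r} : Set V).ncard : ℝ) ≤ C' * b ^ r := by
  have hb : 1 < b := ha.trans_le hab
  have hb' : 0 < 1 - b⁻¹ := sub_pos.2 (inv_lt_one_of_one_lt₀ hb)
  refine ⟨c, ((M : ℝ) + 1) ^ ⌊4 * δ⌋₊ * C * b ^ 2 / (1 - b⁻¹), hc,
    div_pos (by positivity) hb', fun x r hr => ⟨?_, ?_⟩⟩
  · exact (hvol x r hr).1.trans <| Nat.cast_le.2 <| Set.ncard_le_ncard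
      (S.setOf_T_dist_le_subset x r) (S.G_connected.finite_setOf_dist_le hval x r)
  · exact S.ncard_setOf_dist_le_le hhyp hδ hb hC.le hval (fun v m hm => (hvol v m hm).2) x r
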